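/- For b ∈ [0.14, 0.19] fixed, the function t ↦ ρ(t) = (-(1-b)² + t²)/√((1 - (b²+t²))² - 4b²t²) is nondecreasing on [0, 0.1]; in particular ρ(t) ≥ ρ(0) = -(1-b)/(1+b) for all t ∈ [0, 0.1]. -/

import Mathlib

/-
The radicand factors as `((1 - b)² - t²) ((1 + b)² - t²)`, so on `t² ≤ (1 - b)²` the bias is
`ρ(t) = -√(((1 - b)² - t²) / ((1 + b)² - t²)) = -√(1 - 4b / ((1 + b)² - t²))`. For `b > 0` the
quotient under the root decreases as `t` grows, hence `ρ` increases; at `t = 0` it is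
`-√(((1 - b) / (1 + b))²)`.
-/

noncomputable def rhoT (b t : ℝ) : ℝ :=
  (-(1 - b) ^ 2 + t ^ 2) / Real.sqrt ((1 - (b ^ 2 + t ^ 2)) ^ 2 - 4 * b ^ 2 * t ^ 2)

open Set

theorem rhoT_eq_neg_sqrt_div {b t : ℝ} (ht : t ^ 2 ≤ (1 - b) ^ 2) :
    rhoT b t = -√(((1 - b) ^ 2 - t ^ 2) / ((1 + b) ^ 2 - t ^ 2)) := by
  have hN : 0 ≤ (1 - b) ^ 2 - t ^ 2 := sub_nonneg.mpr ht
  have hfactor : (1 - (b ^ 2 + t ^ 2)) ^ 2 - 4 * b ^ 2 * t ^ 2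
      = ((1 - b) ^ 2 - t ^ 2) * ((1 + b) ^ 2 - t ^ 2) := by ring
  have hnum : -(1 - b) ^ 2 + t ^ 2 = -(√((1 - b) ^ 2 - t ^ 2) * √((1 - b) ^ 2 - t ^ 2)) := by
    rw [Real.mul_self_sqrt hN]; ring
  rcases hN.eq_or_lt with hN0 | hNpos
  · simp [rhoT, hfactor, ← hN0, hnum]
  · rw [rhoT, hfactor, hnum, Real.sqrt_mul hN, Real.sqrt_div hN, neg_div,
      mul_div_mul_left _ _ (Real.sqrt_pos.mpr hNpos).ne']

theorem antitoneOn_div_sub_sq {b : ℝ} (hb : 0 < b) :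
    AntitoneOn (fun t : ℝ => ((1 - b) ^ 2 - t ^ 2) / ((1 + b) ^ 2 - t ^ 2)) (Icc 0 (1 - b)) := by
  intro x ⟨hx₀, _⟩ y ⟨hy₀, hy₁⟩ hxy
  have hMy : 0 < (1 + b) ^ 2 - y ^ 2 := by nlinarith
  have hMyx : (1 + b) ^ 2 - y ^ 2 ≤ (1 + b) ^ 2 - x ^ 2 := by nlinarith
  have hsplit : ∀ s : ℝ, (1 + b) ^ 2 - s ^ 2 ≠ 0 →
      ((1 - b) ^ 2 - s ^ 2) / ((1 + b) ^ 2 - s ^ 2) = 1 - 4 * b / ((1 + b) ^ 2 - s ^ 2) := by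
    intro s hs
    field_simp
    ring
  dsimp only
  rw [hsplit x (hMy.trans_le hMyx).ne', hsplit y hMy.ne']
  gcongr

theorem rhoT_monotoneOn {b : ℝ} (hb : 0 < b) : MonotoneOn (rhoT b) (Icc 0 (1 - b)) := by
  intro x hx y hy hxy
  have hsq : ∀ t ∈ Icc 0 (1 - b), t ^ 2 ≤ (1 - b) ^ 2 := fun t ht => pow_le_pow_left₀ ht.1 ht.2 2
  rw [rhoT_eq_neg_sqrt_div (hsq x hx), rhoT_eq_neg_sqrt_div (hsq y hy), neg_le_neg_iff]
  exact Real.sqrt_le_sqrt (antitoneOn_div_sub_sq hb hx hy hxy)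

theorem rhoT_zero {b : ℝ} (hb₀ : -1 < b) (hb₁ : b ≤ 1) : rhoT b 0 = -(1 - b) / (1 + b) := by
  have hq : 0 ≤ (1 - b) / (1 + b) := div_nonneg (by linarith) (by linarith)
  rw [rhoT_eq_neg_sqrt_div (by simp [sq_nonneg]), zero_pow two_ne_zero, sub_zero, sub_zero,
    ← div_pow, Real.sqrt_sq hq, neg_div]

theorem stmt_10 (b : ℝ) (hb : b ∈ Set.Icc (0.14 : ℝ) 0.19) :
    MonotoneOn (rhoT b) (Set.Icc (0 : ℝ) 0.1) ∧
    rhoT b 0 = -(1 - b) / (1 + b) ∧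
    ∀ t ∈ Set.Icc (0 : ℝ) 0.1, rhoT b t ≥ -(1 - b) / (1 + b) := by
  obtain ⟨hb₀, hb₁⟩ := hb
  have hmono : MonotoneOn (rhoT b) (Icc 0 0.1) :=
    (rhoT_monotoneOn (by linarith)).mono (Icc_subset_Icc_right (by linarith))
  have h0 : rhoT b 0 = -(1 - b) / (1 + b) := rhoT_zero (by linarith) (by linarith)
  refine ⟨hmono, h0, fun t ht => ?_⟩
  rw [← h0]
  exact hmono (left_mem_Icc.mpr (by norm_num)) ht ht.1
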